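/- Suppose the vectors v_1,...,v_m ∈ ℤ^n are Farkas-related and let a_1 ≤ b_1, ..., a_m ≤ b_m be integers. A vector w ∈ ℤ^n can be written as w = Σ_{i=1}^m x_i v_i for some integers x_i with a_i ≤ x_i ≤ b_i for each i, if and only if w ∈ Σ_{i=1}^m ℤ v_i and for every {v_1,...,v_m}-indecomposable point [u] ∈ ℝP_+^{n-1} one has (u,w) ≤ Σ_{i=1}^m a_i·((u,v_i) − |(u,v_i)|)/2 + Σ_{i=1}^m b_i·((u,v_i) + |(u,v_i)|)/2. -/

import Mathlib

noncomputable section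

/-- The standard inner product on `ℝ^n`. -/
def dotR {n : ℕ} (u v : Fin n → ℝ) : ℝ := ∑ i, u i * v i

/-- `[u] = [u']` : positive equivalence of nonzero vectors (`u' = r • u` with `r > 0`). -/
def PosEq {n : ℕ} (u u' : Fin n → ℝ) : Prop := ∃ r : ℝ, 0 < r ∧ u' = r • u

/-- `u` is `{v₁,…,vₘ}`-decomposable. -/
def Decomp {n m : ℕ} (v : Fin m → Fin n → ℝ) (u : Fin n → ℝ) : Prop :=
  ∃ u' u'' : Fin n → ℝ, u' ≠ 0 ∧ u'' ≠ 0 ∧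
    u' ∈ Submodule.span ℝ (Set.range v) ∧ u'' ∈ Submodule.span ℝ (Set.range v) ∧
    u = u' + u'' ∧ ¬ PosEq u u' ∧ ¬ PosEq u u'' ∧
    ∀ i, 0 ≤ dotR u' (v i) * dotR u'' (v i)

/-- `u` is `{v₁,…,vₘ}`-indecomposable. -/
def Indecomp {n m : ℕ} (v : Fin m → Fin n → ℝ) (u : Fin n → ℝ) : Prop :=
  u ≠ 0 ∧ u ∈ Submodule.span ℝ (Set.range v) ∧ ¬ Decomp v u

/-- The embedding `ℤ^n ⊆ ℚ^n`. -/
def ZtoQ {n : ℕ} (x : Fin n → ℤ) : Fin n → ℚ := fun i => (x i : ℚ)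

/-- The embedding `ℤ^n ⊆ ℝ^n`. -/
def ZtoR {n : ℕ} (x : Fin n → ℤ) : Fin n → ℝ := fun i => (x i : ℝ)

/-- The vectors `v₁,…,vₘ ∈ ℤ^n` are Farkas-related. -/
def FarkasRelated {n m : ℕ} (v : Fin m → Fin n → ℤ) : Prop :=
  ∀ a b : Fin m → ℤ, (∀ i, a i ≤ b i) →
    ∀ w : Fin n → ℤ, w ∈ Submodule.span ℤ (Set.range v) →
      (∃ x : Fin m → ℚ, (∀ i, (a i : ℚ) ≤ x i ∧ x i ≤ (b i : ℚ)) ∧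
        ZtoQ w = ∑ i, x i • ZtoQ (v i)) →
      ∃ y : Fin m → ℤ, (∀ i, a i ≤ y i ∧ y i ≤ b i) ∧ w = ∑ i, y i • v i

/-!
The inequalities are necessary since `x * d ≤ intervalSupport a b d` for `x ∈ [a, b]`.

Conversely, Fourier–Motzkin elimination proves Farkas' lemma over `ℚ`: if no rational point of the
box is sent to `w`, some `u` in the span of the `vᵢ` satisfies
`(u, w) > ∑ intervalSupport aᵢ bᵢ (u, vᵢ)`, and Farkas-relatedness turns a rational point into
an integral one. It remains to find an indecomposable such `u`. The defect
`f u = (u, w) - ∑ intervalSupport aᵢ bᵢ (u, vᵢ)` is linear on every closed cone on which the signs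
of the `(u, vᵢ)` are fixed, and so is `N u = ∑ |(u, vᵢ)|`. Maximize `f` on the compact slice
`N = 1` of the span and take an extreme point (Krein–Milman) of the set of maximizers. It is
indecomposable: a decomposition `u' + u''` would write it as a proper convex combination of the
maximizers `u' / N u'` and `u'' / N u''`.
-/

open Matrix

section IntervalSupport

variable {K : Type*} [Field K] [LinearOrder K]

/-- `max (a * d) (b * d)`, i.e. the maximum of `x * d` over `x ∈ [a, b]`, when `a ≤ b`. -/
def intervalSupport (a b d : K) : K := a * ((d - |d|) / 2) + b * ((d + |d|) / 2)

lemma sum_intervalSupport_eq {ι : Type*} [Fintype ι] (a b d : ι → K) :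
    ∑ i, intervalSupport (a i) (b i) (d i) =
      ∑ i, a i * ((d i - |d i|) / 2) + ∑ i, b i * ((d i + |d i|) / 2) :=
  Finset.sum_add_distrib

variable [IsStrictOrderedRing K]

@[simp]
lemma intervalSupport_zero (a b : K) : intervalSupport a b 0 = 0 := by
  simp [intervalSupport]

lemma intervalSupport_one (a b : K) : intervalSupport a b 1 = b := by
  simp [intervalSupport]

lemma intervalSupport_neg_one (a b : K) : intervalSupport a b (-1) = -a := by
  simp only [intervalSupport, abs_neg, abs_one]
  ring

lemma intervalSupport_mul_of_nonneg (a b : K) {t : K} (ht : 0 ≤ t) (d : K) :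
    intervalSupport a b (t * d) = t * intervalSupport a b d := by
  simp only [intervalSupport, abs_mul, abs_of_nonneg ht]
  ring

lemma intervalSupport_add_of_mul_nonneg (a b : K) {d d' : K} (h : 0 ≤ d * d') :
    intervalSupport a b (d + d') = intervalSupport a b d + intervalSupport a b d' := by
  simp only [intervalSupport, (abs_add_eq_add_abs_iff d d').2 (mul_nonneg_iff.1 h)]
  ring

lemma intervalSupport_add_le {a b : K} (hab : a ≤ b) (d d' : K) :
    intervalSupport a b (d + d') ≤ intervalSupport a b d + intervalSupport a b d' := by
  have := mul_le_mul_of_nonneg_left (abs_add_le d d') (sub_nonneg.2 hab)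
  simp only [intervalSupport]
  linarith

lemma mul_le_intervalSupport {a b x : K} (ha : a ≤ x) (hb : x ≤ b) (d : K) :
    x * d ≤ intervalSupport a b d := by
  rcases le_total 0 d with hd | hd
  · simp only [intervalSupport, abs_of_nonneg hd]
    nlinarith
  · simp only [intervalSupport, abs_of_nonpos hd]
    nlinarith

lemma sum_intervalSupport_single {ι : Type*} [Fintype ι] [DecidableEq ι] (a b : ι → K)
    (i : ι) (c : K) :
    ∑ j, intervalSupport (a j) (b j) ((Pi.single i c : ι → K) j) = intervalSupport (a i) (b i) c :=
  (Fintype.sum_eq_single i fun j hj => by simp [hj]).trans (by simp)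

end IntervalSupport

lemma Set.Finite.exists_between_of_forall_le {α : Type*} [LinearOrder α] [Nonempty α]
    {A B : Set α} (hA : A.Finite) (hB : B.Finite) (h : ∀ a ∈ A, ∀ b ∈ B, a ≤ b) :
    ∃ t, (∀ a ∈ A, a ≤ t) ∧ ∀ b ∈ B, t ≤ b := by
  rcases A.eq_empty_or_nonempty with rfl | hne
  · obtain ⟨t, ht⟩ := hB.bddBelow
    exact ⟨t, by simp, ht⟩
  · obtain ⟨t, htA, hmax⟩ := Set.exists_max_image A id hA hne
    exact ⟨t, hmax, h t htA⟩

namespace FourierMotzkin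

variable {K : Type*} [Field K] [LinearOrder K] {σ : Type*}

def eliminate (k : σ) (S : Set ((σ → K) × K)) : Set ((σ → K) × K) :=
  {z ∈ S | z.1 k = 0} ∪
    Set.image2 (fun p q => (p.1 k)⁻¹ • p - (q.1 k)⁻¹ • q) {p ∈ S | 0 < p.1 k} {q ∈ S | q.1 k < 0}

variable {S : Set ((σ → K) × K)} {k : σ}

lemma finite_eliminate (hS : S.Finite) : (eliminate k S).Finite :=
  (hS.sep _).union ((hS.sep _).image2 _ (hS.sep _))

lemma apply_eq_zero_of_mem_eliminate {z : (σ → K) × K} (hz : z ∈ eliminate k S) : z.1 k = 0 := by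
  rcases hz with ⟨-, hz⟩ | ⟨p, ⟨-, hpk⟩, q, ⟨-, hqk⟩, rfl⟩
  · exact hz
  · simp [inv_mul_cancel₀ hpk.ne', inv_mul_cancel₀ hqk.ne]

lemma apply_eq_zero_of_mem_eliminate_of_forall {i : σ} (hS : ∀ z ∈ S, z.1 i = 0)
    {z : (σ → K) × K} (hz : z ∈ eliminate k S) : z.1 i = 0 := by
  rcases hz with ⟨hz, -⟩ | ⟨p, ⟨hp, -⟩, q, ⟨hq, -⟩, rfl⟩
  · exact hS z hz
  · simp [hS p hp, hS q hq]

variable [IsStrictOrderedRing K]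

lemma eliminate_subset_hull : eliminate k S ⊆ PointedCone.hull K S := by
  rintro _ (⟨hz, -⟩ | ⟨p, ⟨hp, hpk⟩, q, ⟨hq, hqk⟩, rfl⟩)
  · exact PointedCone.subset_hull hz
  · dsimp only
    rw [sub_eq_add_neg, ← neg_smul, ← inv_neg]
    exact add_mem (PointedCone.smul_mem _ (inv_nonneg.2 hpk.le) (PointedCone.subset_hull hp))
      (PointedCone.smul_mem _ (inv_nonneg.2 (neg_nonneg.2 hqk.le)) (PointedCone.subset_hull hq))

variable [Fintype σ]

def IsFeasible (S : Set ((σ → K) × K)) : Prop := ∃ x : σ → K, ∀ z ∈ S, z.1 ⬝ᵥ x ≤ z.2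

lemma IsFeasible.of_eliminate [DecidableEq σ] (hS : S.Finite) (h : IsFeasible (eliminate k S)) :
    IsFeasible S := by
  obtain ⟨x, hx⟩ := h
  set bound : (σ → K) × K → K := fun z => (z.2 - z.1 ⬝ᵥ x) / z.1 k
  obtain ⟨t, hlow, hup⟩ := Set.Finite.exists_between_of_forall_le
    ((hS.sep fun q => q.1 k < 0).image bound) ((hS.sep fun p => 0 < p.1 k).image bound) <| by
      rintro _ ⟨q, ⟨hq, hqk⟩, rfl⟩ _ ⟨p, ⟨hp, hpk⟩, rfl⟩
      have := hx _ (Or.inr ⟨p, ⟨hp, hpk⟩, q, ⟨hq, hqk⟩, rfl⟩)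
      simp only [Prod.fst_sub, Prod.snd_sub, Prod.smul_fst, Prod.smul_snd, sub_dotProduct,
        smul_dotProduct, smul_eq_mul] at this
      simp only [bound, div_eq_inv_mul]
      linarith
  refine ⟨x + t • Pi.single k 1, fun z hz => ?_⟩
  rw [dotProduct_add, dotProduct_smul, dotProduct_single, mul_one, smul_eq_mul]
  rcases lt_trichotomy (z.1 k) 0 with hzk | hzk | hzk
  · have := (div_le_iff_of_neg hzk).1 (hlow _ ⟨z, ⟨hz, hzk⟩, rfl⟩)
    linarith
  · rw [hzk, mul_zero, add_zero]
    exact hx z (Or.inl ⟨hz, hzk⟩)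
  · have := (le_div_iff₀ hzk).1 (hup _ ⟨z, ⟨hz, hzk⟩, rfl⟩)
    linarith

lemma isFeasible_or_mem_hull_of_forall_eq_zero (h : ∀ z ∈ S, z.1 = 0) :
    IsFeasible S ∨ ((0, -1) : (σ → K) × K) ∈ PointedCone.hull K S := by
  by_cases hc : ∃ z ∈ S, z.2 < 0
  · obtain ⟨z, hz, hz2⟩ := hc
    have hscale : ((0, -1) : (σ → K) × K) = (-z.2)⁻¹ • z := by
      ext
      · simp [h z hz]
      · simp [inv_mul_cancel₀ hz2.ne]
    rw [hscale]
    exact Or.inr <| PointedCone.smul_mem _ (inv_nonneg.2 (neg_nonneg.2 hz2.le))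
      (PointedCone.subset_hull hz)
  · exact Or.inl ⟨0, fun z hz => by simpa using not_lt.1 fun h => hc ⟨z, hz, h⟩⟩

/-- Farkas' lemma: unless the system is feasible, a nonnegative combination of its inequalities
is `0 ⬝ᵥ x ≤ -1`. -/
theorem isFeasible_or_mem_hull (hS : S.Finite) :
    IsFeasible S ∨ ((0, -1) : (σ → K) × K) ∈ PointedCone.hull K S := by
  classical
  suffices ∀ T : Finset σ, ∀ S : Set ((σ → K) × K), S.Finite → (∀ z ∈ S, ∀ i ∉ T, z.1 i = 0) →
      IsFeasible S ∨ ((0, -1) : (σ → K) × K) ∈ PointedCone.hull K S from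
    this Finset.univ S hS (by simp)
  intro T
  induction T using Finset.induction_on with
  | empty =>
    exact fun S _ hS => isFeasible_or_mem_hull_of_forall_eq_zero fun z hz => funext fun i =>
      hS z hz i (Finset.notMem_empty i)
  | insert k T _ ih =>
    intro S hfin hS
    refine (ih (eliminate k S) (finite_eliminate hfin) fun z hz i hi => ?_).imp
      (IsFeasible.of_eliminate hfin) (Submodule.span_le.2 eliminate_subset_hull ·)
    by_cases hik : i = k
    · exact hik ▸ apply_eq_zero_of_mem_eliminate hz
    · exact apply_eq_zero_of_mem_eliminate_of_forall
        (fun z' hz' => hS z' hz' i (by simp [hik, hi])) hz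

end FourierMotzkin

section Box

variable {K : Type*} [Field K] [LinearOrder K] [IsStrictOrderedRing K]
  {ι σ : Type*} [Fintype ι] [Fintype σ]

lemma eq_zero_of_mem_span_of_forall_dotProduct_eq_zero {v : ι → σ → K} {z : σ → K}
    (hz : z ∈ Submodule.span K (Set.range v)) (h : ∀ i, z ⬝ᵥ v i = 0) : z = 0 := by
  obtain ⟨c, rfl⟩ := (Submodule.mem_span_range_iff_exists_fun K).1 hz
  rw [← dotProduct_self_eq_zero, dotProduct_sum]
  exact Finset.sum_eq_zero fun i _ => by rw [dotProduct_smul, h, smul_zero]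

lemma dotProduct_sum_smul_le_sum_intervalSupport {a b x : ι → K}
    (hx : ∀ i, a i ≤ x i ∧ x i ≤ b i) (v : ι → σ → K) (u : σ → K) :
    u ⬝ᵥ ∑ i, x i • v i ≤ ∑ i, intervalSupport (a i) (b i) (u ⬝ᵥ v i) := by
  rw [dotProduct_sum]
  exact Finset.sum_le_sum fun i _ => by
    rw [dotProduct_smul, smul_eq_mul]
    exact mul_le_intervalSupport (hx i).1 (hx i).2 _

/-- The system `a ≤ x ≤ b`, `∑ i, x i • v i = w`. The equation enters through its products with
the `v j`, so that certificates of infeasibility lie in `span K (Set.range v)`. -/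
def boxSystem [DecidableEq ι] (a b : ι → K) (v : ι → σ → K) (w : σ → K) : Set ((ι → K) × K) :=
  Set.range (fun i => (Pi.single i 1, b i)) ∪ Set.range (fun i => (Pi.single i (-1), -a i)) ∪
    Set.range (fun j => (fun i => v i ⬝ᵥ v j, w ⬝ᵥ v j)) ∪
    Set.range (fun j => (-fun i => v i ⬝ᵥ v j, -(w ⬝ᵥ v j)))

variable [DecidableEq ι] {a b : ι → K} {v : ι → σ → K} {w : σ → K}

lemma exists_of_isFeasible_boxSystem (hw : w ∈ Submodule.span K (Set.range v))
    (h : FourierMotzkin.IsFeasible (boxSystem a b v w)) :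
    ∃ x : ι → K, (∀ i, a i ≤ x i ∧ x i ≤ b i) ∧ w = ∑ i, x i • v i := by
  obtain ⟨x, hx⟩ := h
  refine ⟨x, fun i => ⟨?_, ?_⟩, ?_⟩
  · simpa using hx _ (Or.inl (Or.inl (Or.inr ⟨i, rfl⟩)))
  · simpa using hx _ (Or.inl (Or.inl (Or.inl ⟨i, rfl⟩)))
  · have hrow : ∀ j, (fun i => v i ⬝ᵥ v j) ⬝ᵥ x = (∑ i, x i • v i) ⬝ᵥ v j := fun j => by
      rw [dotProduct_comm, sum_dotProduct]
      simp only [smul_dotProduct, smul_eq_mul]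
      rfl
    refine (sub_eq_zero.1 (eq_zero_of_mem_span_of_forall_dotProduct_eq_zero
      (sub_mem (Submodule.sum_mem _ fun i _ => Submodule.smul_mem _ _
        (Submodule.subset_span ⟨i, rfl⟩)) hw) fun j => ?_)).symm
    have hle := hx _ (Or.inl (Or.inr ⟨j, rfl⟩))
    have hge := hx _ (Or.inr ⟨j, rfl⟩)
    simp only [neg_dotProduct, neg_le_neg_iff, hrow] at hle hge
    rw [sub_dotProduct]
    exact sub_eq_zero.2 (le_antisymm hle hge)

/-- The inequalities `d ⬝ᵥ x ≤ c` that some `u ∈ span K (range v)` certifies to hold on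
`{x | a ≤ x ≤ b, ∑ i, x i • v i = w}`. -/
def certifiedCone (hab : ∀ i, a i ≤ b i) (v : ι → σ → K) (w : σ → K) :
    PointedCone K ((ι → K) × K) where
  carrier := {z | ∃ u ∈ Submodule.span K (Set.range v),
    ∑ i, intervalSupport (a i) (b i) (z.1 i + u ⬝ᵥ v i) ≤ z.2 + u ⬝ᵥ w}
  zero_mem' := ⟨0, zero_mem _, by simp⟩
  add_mem' := by
    rintro z z' ⟨u, hu, hz⟩ ⟨u', hu', hz'⟩
    refine ⟨u + u', add_mem hu hu', le_trans ?_ (add_le_add hz hz' |>.trans_eq ?_)⟩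
    · rw [← Finset.sum_add_distrib]
      refine Finset.sum_le_sum fun i _ => le_of_eq_of_le ?_ (intervalSupport_add_le (hab i) _ _)
      simp only [Prod.fst_add, Pi.add_apply, add_dotProduct]
      ring_nf
    · simp only [Prod.snd_add, add_dotProduct]
      ring
  smul_mem' := by
    rintro ⟨t, ht⟩ z ⟨u, hu, hz⟩
    refine ⟨t • u, Submodule.smul_mem _ t hu, ?_⟩
    have := mul_le_mul_of_nonneg_left hz ht
    simp only [Nonneg.mk_smul, Prod.smul_fst, Prod.smul_snd, Pi.smul_apply, smul_eq_mul,
      smul_dotProduct, ← mul_add, intervalSupport_mul_of_nonneg _ _ ht, ← Finset.mul_sum]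
    linarith

lemma boxSystem_subset_certifiedCone (hab : ∀ i, a i ≤ b i) :
    boxSystem a b v w ⊆ certifiedCone hab v w := by
  rintro _ (((⟨i, rfl⟩ | ⟨i, rfl⟩) | ⟨j, rfl⟩) | ⟨j, rfl⟩)
  · exact ⟨0, zero_mem _, by simp [sum_intervalSupport_single, intervalSupport_one]⟩
  · exact ⟨0, zero_mem _, by simp [sum_intervalSupport_single, intervalSupport_neg_one]⟩
  · exact ⟨-v j, neg_mem (Submodule.subset_span ⟨j, rfl⟩), by simp [dotProduct_comm (v j)]⟩
  · exact ⟨v j, Submodule.subset_span ⟨j, rfl⟩, by simp [dotProduct_comm (v j)]⟩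

theorem exists_mem_box_eq_sum_smul_of_forall_dotProduct_le (hab : ∀ i, a i ≤ b i)
    (hw : w ∈ Submodule.span K (Set.range v))
    (h : ∀ u ∈ Submodule.span K (Set.range v),
      u ⬝ᵥ w ≤ ∑ i, intervalSupport (a i) (b i) (u ⬝ᵥ v i)) :
    ∃ x : ι → K, (∀ i, a i ≤ x i ∧ x i ≤ b i) ∧ w = ∑ i, x i • v i := by
  refine (FourierMotzkin.isFeasible_or_mem_hull (by unfold boxSystem; exact Set.toFinite _)).elim
    (exists_of_isFeasible_boxSystem hw) fun hcert => ?_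
  obtain ⟨u, hu, hle⟩ := Submodule.span_le.2 (boxSystem_subset_certifiedCone hab) hcert
  simp only [Pi.zero_apply, zero_add] at hle
  linarith [h u hu]

end Box

section Indecomposable

variable {n m : ℕ} (v : Fin m → Fin n → ℝ)

lemma dotR_eq_dotProduct (u w : Fin n → ℝ) : dotR u w = u ⬝ᵥ w := rfl

/-- Linearity on each closed cone on which no `dotR · (v i)` changes sign; the pairs allowed in
`Decomp` are exactly those lying in a common such cone. -/
structure IsSignLinear (f : (Fin n → ℝ) → ℝ) : Prop where
  map_smul : ∀ r : ℝ, 0 ≤ r → ∀ u, f (r • u) = r * f u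
  map_add : ∀ u u', (∀ i, 0 ≤ dotR u (v i) * dotR u' (v i)) → f (u + u') = f u + f u'

variable {v}

lemma IsSignLinear.map_zero {f : (Fin n → ℝ) → ℝ} (hf : IsSignLinear v f) : f 0 = 0 := by
  simpa using hf.map_smul 0 le_rfl 0

lemma IsSignLinear.sub {f g : (Fin n → ℝ) → ℝ} (hf : IsSignLinear v f) (hg : IsSignLinear v g) :
    IsSignLinear v fun u => f u - g u where
  map_smul r hr u := by rw [hf.map_smul r hr, hg.map_smul r hr, mul_sub]
  map_add u u' h := by rw [hf.map_add u u' h, hg.map_add u u' h]; ring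

variable (v)

lemma isSignLinear_dotR_left (w : Fin n → ℝ) : IsSignLinear v (dotR · w) where
  map_smul r _ u := smul_dotProduct r u w
  map_add u u' _ := add_dotProduct u u' w

lemma isSignLinear_sum_comp {φ : Fin m → ℝ → ℝ} (hsmul : ∀ i t d, 0 ≤ t → φ i (t * d) = t * φ i d)
    (hadd : ∀ i d d', 0 ≤ d * d' → φ i (d + d') = φ i d + φ i d') :
    IsSignLinear v fun u => ∑ i, φ i (dotR u (v i)) where
  map_smul r hr u := by
    simp only [dotR_eq_dotProduct, smul_dotProduct, smul_eq_mul, hsmul _ _ _ hr, Finset.mul_sum]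
  map_add u u' h := by
    simp only [dotR_eq_dotProduct, add_dotProduct, ← Finset.sum_add_distrib] at h ⊢
    exact Finset.sum_congr rfl fun i _ => hadd i _ _ (h i)

def sumAbsDot (u : Fin n → ℝ) : ℝ := ∑ i, |dotR u (v i)|

lemma isSignLinear_sumAbsDot : IsSignLinear v (sumAbsDot v) :=
  isSignLinear_sum_comp v (fun _ t d ht => by rw [abs_mul, abs_of_nonneg ht])
    fun _ d d' h => (abs_add_eq_add_abs_iff d d').2 (mul_nonneg_iff.1 h)

lemma continuous_sumAbsDot : Continuous (sumAbsDot v) := by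
  unfold sumAbsDot dotR
  fun_prop

lemma sumAbsDot_pos {u : Fin n → ℝ} (hu : u ∈ Submodule.span ℝ (Set.range v)) (hu0 : u ≠ 0) :
    0 < sumAbsDot v u := by
  refine (Finset.sum_nonneg fun i _ => abs_nonneg _).lt_of_ne fun h => hu0 ?_
  refine eq_zero_of_mem_span_of_forall_dotProduct_eq_zero hu fun i => abs_eq_zero.1 ?_
  exact (Finset.sum_eq_zero_iff_of_nonneg fun i _ => abs_nonneg _).1 h.symm i (Finset.mem_univ i)

lemma exists_pos_mul_norm_le_sumAbsDot :
    ∃ c > 0, ∀ u ∈ Submodule.span ℝ (Set.range v), c * ‖u‖ ≤ sumAbsDot v u := by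
  set V := Submodule.span ℝ (Set.range v)
  obtain ⟨c, hc, hcN⟩ := ((isCompact_sphere (0 : Fin n → ℝ) 1).inter_left
    (Submodule.closed_of_finiteDimensional V)).exists_forall_le'
    (continuous_sumAbsDot v).continuousOn fun u hu =>
      sumAbsDot_pos v hu.1 (ne_zero_of_mem_sphere one_ne_zero ⟨u, hu.2⟩)
  refine ⟨c, hc, fun u hu => ?_⟩
  rcases eq_or_ne u 0 with rfl | hu0
  · simp [sumAbsDot, dotR]
  · have hnorm : 0 < ‖u‖ := norm_pos_iff.2 hu0
    have := hcN (‖u‖⁻¹ • u) ⟨V.smul_mem _ hu, by simp [norm_smul, hnorm.ne']⟩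
    rw [(isSignLinear_sumAbsDot v).map_smul _ (inv_nonneg.2 hnorm.le), inv_mul_eq_div,
      le_div_iff₀ hnorm] at this
    linarith

def sumAbsDotSphere : Set (Fin n → ℝ) :=
  {u | u ∈ Submodule.span ℝ (Set.range v) ∧ sumAbsDot v u = 1}

lemma inv_sumAbsDot_smul_mem_sumAbsDotSphere {u : Fin n → ℝ}
    (hu : u ∈ Submodule.span ℝ (Set.range v)) (hN : 0 < sumAbsDot v u) :
    (sumAbsDot v u)⁻¹ • u ∈ sumAbsDotSphere v :=
  ⟨Submodule.smul_mem _ _ hu, by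
    rw [(isSignLinear_sumAbsDot v).map_smul _ (inv_nonneg.2 hN.le), inv_mul_cancel₀ hN.ne']⟩

lemma isCompact_sumAbsDotSphere : IsCompact (sumAbsDotSphere v) := by
  obtain ⟨c, hc, hcN⟩ := exists_pos_mul_norm_le_sumAbsDot v
  refine Metric.isCompact_of_isClosed_isBounded
    ((Submodule.closed_of_finiteDimensional _).inter
      (isClosed_eq (continuous_sumAbsDot v) continuous_const))
    ((Metric.isBounded_closedBall (x := 0) (r := c⁻¹)).subset fun u ⟨hu, hu1⟩ => ?_)
  rw [mem_closedBall_zero_iff, ← one_div, le_div_iff₀' hc]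
  exact hu1 ▸ hcN u hu

variable {v}

lemma IsSignLinear.le_mul_sumAbsDot {f : (Fin n → ℝ) → ℝ} (hf : IsSignLinear v f)
    {u₁ : Fin n → ℝ} (hmax : IsMaxOn f (sumAbsDotSphere v) u₁) {u : Fin n → ℝ}
    (hu : u ∈ Submodule.span ℝ (Set.range v)) : f u ≤ f u₁ * sumAbsDot v u := by
  rcases eq_or_ne u 0 with rfl | hu0
  · simp [hf.map_zero, (isSignLinear_sumAbsDot v).map_zero]
  · have hN := sumAbsDot_pos v hu hu0
    have := hmax (inv_sumAbsDot_smul_mem_sumAbsDotSphere v hu hN)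
    rw [Set.mem_ofPred_eq, hf.map_smul _ (inv_nonneg.2 hN.le), inv_mul_le_iff₀ hN] at this
    linarith

lemma indecomp_of_mem_extremePoints {f : (Fin n → ℝ) → ℝ} (hf : IsSignLinear v f) {M : ℝ}
    (hM : ∀ u ∈ Submodule.span ℝ (Set.range v), f u ≤ M * sumAbsDot v u) {u₀ : Fin n → ℝ}
    (hu₀ : u₀ ∈ Set.extremePoints ℝ (sumAbsDotSphere v ∩ {u | f u = M})) :
    Indecomp v u₀ := by
  obtain ⟨⟨⟨hV, hN⟩, hfM⟩, hext⟩ := hu₀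
  refine ⟨fun h => by simp [h, (isSignLinear_sumAbsDot v).map_zero] at hN, hV, ?_⟩
  rintro ⟨u', u'', hu'0, hu''0, hu', hu'', rfl, hnot, -, hcomp⟩
  have hNadd := (isSignLinear_sumAbsDot v).map_add u' u'' hcomp
  have hN' := sumAbsDot_pos v hu' hu'0
  have hN'' := sumAbsDot_pos v hu'' hu''0
  have hsplit : f u' + f u'' = M * sumAbsDot v u' + M * sumAbsDot v u'' := by
    rw [← hf.map_add u' u'' hcomp, ← mul_add, ← hNadd, hN, mul_one]
    exact hfM
  have hnormalize : ∀ x ∈ Submodule.span ℝ (Set.range v), 0 < sumAbsDot v x →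
      f x = M * sumAbsDot v x → (sumAbsDot v x)⁻¹ • x ∈ sumAbsDotSphere v ∩ {u | f u = M} :=
    fun x hx hNx hfx => ⟨inv_sumAbsDot_smul_mem_sumAbsDotSphere v hx hNx, by
      rw [Set.mem_ofPred_eq, hf.map_smul _ (inv_nonneg.2 hNx.le), hfx, mul_comm M,
        inv_mul_cancel_left₀ hNx.ne']⟩
  have := hext (hnormalize u' hu' hN' (by linarith [hM u' hu', hM u'' hu'']))
    (hnormalize u'' hu'' hN'' (by linarith [hM u' hu', hM u'' hu'']))
    ⟨_, _, hN', hN'', hNadd ▸ hN, by simp only [smul_inv_smul₀ hN'.ne', smul_inv_smul₀ hN''.ne']⟩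
  exact hnot ⟨_, hN', by rw [← this, smul_inv_smul₀ hN'.ne']⟩

theorem IsSignLinear.exists_indecomp_pos {f : (Fin n → ℝ) → ℝ} (hf : IsSignLinear v f)
    (hfc : Continuous f) {u : Fin n → ℝ} (hu : u ∈ Submodule.span ℝ (Set.range v))
    (hfu : 0 < f u) : ∃ u₀, Indecomp v u₀ ∧ 0 < f u₀ := by
  have hN := sumAbsDot_pos v hu fun h => hfu.ne' (h ▸ hf.map_zero)
  obtain ⟨u₁, hu₁, hmax⟩ := (isCompact_sumAbsDotSphere v).exists_isMaxOn
    ⟨_, inv_sumAbsDot_smul_mem_sumAbsDotSphere v hu hN⟩ hfc.continuousOn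
  have hM := fun x hx => hf.le_mul_sumAbsDot hmax (u := x) hx
  have hMpos : 0 < f u₁ := pos_of_mul_pos_left (hfu.trans_le (hM u hu)) hN.le
  obtain ⟨u₀, hu₀⟩ := ((isCompact_sumAbsDotSphere v).inter_right
    (isClosed_eq hfc continuous_const)).extremePoints_nonempty ⟨u₁, hu₁, rfl⟩
  exact ⟨u₀, indecomp_of_mem_extremePoints hf hM hu₀, hu₀.1.2 ▸ hMpos⟩

variable (v) in
theorem dotR_le_sum_intervalSupport_of_forall_indecomp {a b : Fin m → ℝ} {w : Fin n → ℝ}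
    (h : ∀ u, Indecomp v u → dotR u w ≤ ∑ i, intervalSupport (a i) (b i) (dotR u (v i)))
    {u : Fin n → ℝ} (hu : u ∈ Submodule.span ℝ (Set.range v)) :
    dotR u w ≤ ∑ i, intervalSupport (a i) (b i) (dotR u (v i)) := by
  by_contra hlt
  obtain ⟨u₀, hind, hpos⟩ := ((isSignLinear_dotR_left v w).sub (isSignLinear_sum_comp v
    (fun i _ _ ht => intervalSupport_mul_of_nonneg _ _ ht _)
    fun i _ _ h => intervalSupport_add_of_mul_nonneg _ _ h)).exists_indecomp_pos
    (by unfold dotR intervalSupport; fun_prop) hu (sub_pos.2 (not_le.1 hlt))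
  exact (h u₀ hind).not_gt (sub_pos.1 hpos)

end Indecomposable

lemma algebraMap_comp_mem_span {R A : Type*} [CommSemiring R] [Semiring A] [Algebra R A]
    {ι σ : Type*} {v : ι → σ → R} {x : σ → R} (hx : x ∈ Submodule.span R (Set.range v)) :
    algebraMap R A ∘ x ∈ Submodule.span A (Set.range fun i => algebraMap R A ∘ v i) := by
  have := Submodule.apply_mem_span_image_of_mem_span ((Algebra.linearMap R A).compLeft σ) hx
  rw [← Set.range_comp] at this
  exact Submodule.span_le_restrictScalars R A _ this

lemma algebraMap_comp_eq_ZtoQ {n : ℕ} (x : Fin n → ℤ) : algebraMap ℤ ℚ ∘ x = ZtoQ x := by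
  ext
  simp [ZtoQ]

lemma algebraMap_comp_ZtoQ {n : ℕ} (x : Fin n → ℤ) : algebraMap ℚ ℝ ∘ ZtoQ x = ZtoR x := by
  ext
  simp [ZtoQ, ZtoR]

lemma ZtoQ_mem_span {n m : ℕ} {v : Fin m → Fin n → ℤ} {w : Fin n → ℤ}
    (hw : w ∈ Submodule.span ℤ (Set.range v)) :
    ZtoQ w ∈ Submodule.span ℚ (Set.range fun i => ZtoQ (v i)) := by
  simpa only [algebraMap_comp_eq_ZtoQ] using algebraMap_comp_mem_span (A := ℚ) hw

lemma algebraMap_comp_mem_span_ZtoR {n m : ℕ} {v : Fin m → Fin n → ℤ} {u : Fin n → ℚ}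
    (hu : u ∈ Submodule.span ℚ (Set.range fun i => ZtoQ (v i))) :
    algebraMap ℚ ℝ ∘ u ∈ Submodule.span ℝ (Set.range fun i => ZtoR (v i)) := by
  simpa only [algebraMap_comp_ZtoQ] using algebraMap_comp_mem_span (A := ℝ) hu

lemma ZtoR_sum_smul {n m : ℕ} (x : Fin m → ℤ) (v : Fin m → Fin n → ℤ) :
    ZtoR (∑ i, x i • v i) = ∑ i, (x i : ℝ) • ZtoR (v i) := by
  ext
  simp [ZtoR, Finset.sum_apply]

lemma Rat.cast_intervalSupport (a b d : ℚ) :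
    ((intervalSupport a b d : ℚ) : ℝ) = intervalSupport (a : ℝ) b d := by
  simp [intervalSupport]

lemma dotProduct_ZtoQ_le_of_dotR_le {n m : ℕ} {v : Fin m → Fin n → ℤ} {a b : Fin m → ℤ}
    {w : Fin n → ℤ} {u : Fin n → ℚ}
    (h : dotR (algebraMap ℚ ℝ ∘ u) (ZtoR w) ≤
      ∑ i, intervalSupport (a i : ℝ) (b i) (dotR (algebraMap ℚ ℝ ∘ u) (ZtoR (v i)))) :
    u ⬝ᵥ ZtoQ w ≤ ∑ i, intervalSupport (a i : ℚ) (b i) (u ⬝ᵥ ZtoQ (v i)) := by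
  simp only [← algebraMap_comp_ZtoQ, dotR_eq_dotProduct, ← RingHom.map_dotProduct,
    eq_ratCast] at h
  refine Rat.cast_le.1 (h.trans_eq ?_)
  simp only [Rat.cast_sum, Rat.cast_intervalSupport, Rat.cast_intCast]

/-- **Theorem 3.2**: Farkas' lemma over ℤ for Farkas-related vectors. -/
theorem farkas_integers {n m : ℕ} (v : Fin m → Fin n → ℤ)
    (hFR : FarkasRelated v) (a b : Fin m → ℤ) (hab : ∀ i, a i ≤ b i) (w : Fin n → ℤ) :
    (∃ x : Fin m → ℤ, (∀ i, a i ≤ x i ∧ x i ≤ b i) ∧ w = ∑ i, x i • v i) ↔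
      (w ∈ Submodule.span ℤ (Set.range v) ∧
        ∀ u : Fin n → ℝ, Indecomp (fun i => ZtoR (v i)) u →
          dotR u (ZtoR w) ≤
            ∑ i, (a i : ℝ) * ((dotR u (ZtoR (v i)) - |dotR u (ZtoR (v i))|) / 2) +
            ∑ i, (b i : ℝ) * ((dotR u (ZtoR (v i)) + |dotR u (ZtoR (v i))|) / 2)) := by
  simp only [← sum_intervalSupport_eq]
  constructor
  · rintro ⟨x, hx, rfl⟩
    refine ⟨Submodule.sum_mem _ fun i _ => Submodule.smul_mem _ _ (Submodule.subset_span ⟨i, rfl⟩),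
      fun u _ => ?_⟩
    rw [ZtoR_sum_smul]
    exact dotProduct_sum_smul_le_sum_intervalSupport
      (fun i => ⟨Int.cast_le.2 (hx i).1, Int.cast_le.2 (hx i).2⟩) _ u
  · rintro ⟨hw, hind⟩
    refine hFR a b hab w hw (exists_mem_box_eq_sum_smul_of_forall_dotProduct_le
      (fun i => Int.cast_le.2 (hab i)) (ZtoQ_mem_span hw) fun u hu => ?_)
    exact dotProduct_ZtoQ_le_of_dotR_le
      (dotR_le_sum_intervalSupport_of_forall_indecomp _ hind (algebraMap_comp_mem_span_ZtoR hu))
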